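/- Let n ∈ ℝ, k_n = n − 1, and k₀, k₁, k₂ ∈ ℝ. Consider the Hamiltonian H_nc1 = T_n + k₀ r^{n−1} + r^{2k_n}[k₁/sin²(k_n φ) + k₂ cos(k_n φ)/sin²(k_n φ)], defined on the open subset of Ω = {r > 0} where sin(k_n φ) ≠ 0. Then the two functions J_c2 = p_φ² + 2[k₁/sin²(k_n φ) + k₂ cos(k_n φ)/sin²(k_n φ)] and J_c3 = P₂ p_φ − k₀ cos(k_n φ) − 2k₁ r^{k_n} csc(k_n φ) cot(k_n φ) − k₂ r^{k_n}(csc²(k_n φ) + cot²(k_n φ)) are constants of motion: {J_c2, H_nc1} = 0 and {J_c3, H_nc1} = 0 at every point of that open set. -/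

import Mathlib

/-!
Write `A = r^(n-1)`, `s = sin(k_n φ)`, `c = cos(k_n φ)`, and let `U = (k₁ + k₂ c)/s²` be the
angular potential of `H_nc1` (`angularPotential`) and `V = (2k₁ c + k₂(1 + c²))/s²` the angular
part of `J_c3` (`cscCotPotential`).
For `r > 0` one has `H_nc1 = A²((r² p_r² + p_φ²)/2 + U) + k₀ A` and
`J_c3 = A((r p_r s − p_φ c) p_φ − V) − k₀ c`, and `∂_r A = k_n A / r`.
Substituting the partial derivatives, with `∂_φ H_nc1 = A² U'` rewritten by `U' = −k_n V / s`
(this uses `s² + c² = 1`), all terms of `{J_c3, H_nc1}` cancel in pairs except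
`−A³ p_φ (V' + 2k_n (s U + c V / s))`, which vanishes by the angular identity
`V' = −2k_n (s U + c V / s)`. The other bracket is `{J_c2, H_nc1} = 2 U' · A² p_φ − 2 p_φ · A² U'`.
-/

open Real

/-- Canonical Poisson bracket on the phase space Ω ⊆ ℝ⁴ with coordinates (r, φ, p_r, p_φ):
{F,G} = F_r G_{p_r} − F_{p_r} G_r + F_φ G_{p_φ} − F_{p_φ} G_φ. -/
noncomputable def pb (F G : ℝ → ℝ → ℝ → ℝ → ℝ) (r φ pr pφ : ℝ) : ℝ :=
  (deriv (fun x => F x φ pr pφ) r) * (deriv (fun x => G r φ x pφ) pr)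
    - (deriv (fun x => F r φ x pφ) pr) * (deriv (fun x => G x φ pr pφ) r)
    + (deriv (fun x => F r x pr pφ) φ) * (deriv (fun x => G r φ pr x) pφ)
    - (deriv (fun x => F r φ pr x) pφ) * (deriv (fun x => G r x pr pφ) φ)

/-- Kinetic Hamiltonian T_n = (1/2) r^(2n) (p_r² + p_φ²/r²) of the
position dependent mass m_n = 1/r^(2n). -/
noncomputable def Tkin (n : ℝ) (r φ pr pφ : ℝ) : ℝ :=
  (1/2) * r ^ (2*n) * (pr^2 + pφ^2 / r^2)

/-- Noether momentum P₁ = rⁿ (p_r cos(k_n φ) + (p_φ/r) sin(k_n φ)), k_n = n − 1. -/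
noncomputable def P1 (n : ℝ) (r φ pr pφ : ℝ) : ℝ :=
  r ^ n * (pr * cos ((n-1)*φ) + (pφ / r) * sin ((n-1)*φ))

/-- Noether momentum P₂ = rⁿ (p_r sin(k_n φ) − (p_φ/r) cos(k_n φ)), k_n = n − 1. -/
noncomputable def P2 (n : ℝ) (r φ pr pφ : ℝ) : ℝ :=
  r ^ n * (pr * sin ((n-1)*φ) - (pφ / r) * cos ((n-1)*φ))

/-- The Hamiltonian H_nc1 = T_n + k₀ r^(n−1)
      + r^(2k_n)[k₁/sin²(k_n φ) + k₂ cos(k_n φ)/sin²(k_n φ)]. -/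
noncomputable def Hnc1 (n k0 k1 k2 : ℝ) (r φ pr pφ : ℝ) : ℝ :=
  Tkin n r φ pr pφ + k0 * r ^ (n-1)
    + r ^ (2*(n-1)) * (k1 / (sin ((n-1)*φ))^2 + k2 * cos ((n-1)*φ) / (sin ((n-1)*φ))^2)


theorem pb_eq_of_hasDerivAt {F G : ℝ → ℝ → ℝ → ℝ → ℝ} {r φ pr pφ : ℝ}
    {Fr Fφ Fpr Fpφ Gr Gφ Gpr Gpφ : ℝ}
    (hFr : HasDerivAt (fun x => F x φ pr pφ) Fr r)
    (hFφ : HasDerivAt (fun x => F r x pr pφ) Fφ φ)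
    (hFpr : HasDerivAt (fun x => F r φ x pφ) Fpr pr)
    (hFpφ : HasDerivAt (fun x => F r φ pr x) Fpφ pφ)
    (hGr : HasDerivAt (fun x => G x φ pr pφ) Gr r)
    (hGφ : HasDerivAt (fun x => G r x pr pφ) Gφ φ)
    (hGpr : HasDerivAt (fun x => G r φ x pφ) Gpr pr)
    (hGpφ : HasDerivAt (fun x => G r φ pr x) Gpφ pφ) :
    pb F G r φ pr pφ = Fr * Gpr - Fpr * Gr + Fφ * Gpφ - Fpφ * Gφ := by
  rw [pb, hFr.deriv, hFφ.deriv, hFpr.deriv, hFpφ.deriv, hGr.deriv, hGφ.deriv, hGpr.deriv,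
    hGpφ.deriv]

section Angular

variable (n k1 k2 : ℝ)

noncomputable def angularPotential (φ : ℝ) : ℝ :=
  k1 / (sin ((n-1)*φ))^2 + k2 * cos ((n-1)*φ) / (sin ((n-1)*φ))^2

noncomputable def cscCotPotential (φ : ℝ) : ℝ :=
  2 * k1 * ((1 / sin ((n-1)*φ)) * (cos ((n-1)*φ) / sin ((n-1)*φ)))
    + k2 * ((1 / sin ((n-1)*φ))^2 + (cos ((n-1)*φ) / sin ((n-1)*φ))^2)

variable {n} {φ : ℝ}

theorem hasDerivAt_sin_const_mul (a : ℝ) :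
    HasDerivAt (fun x => sin (a * x)) (cos (a * φ) * a) φ :=
  ((hasDerivAt_id' φ).const_mul a).sin.congr_deriv (by ring)

theorem hasDerivAt_cos_const_mul (a : ℝ) :
    HasDerivAt (fun x => cos (a * x)) (-sin (a * φ) * a) φ :=
  ((hasDerivAt_id' φ).const_mul a).cos.congr_deriv (by ring)

theorem hasDerivAt_angularPotential (hs : sin ((n-1)*φ) ≠ 0) :
    HasDerivAt (angularPotential n k1 k2)
      (-(n-1) * cscCotPotential n k1 k2 φ / sin ((n-1)*φ)) φ := by
  have hs2 := pow_ne_zero 2 hs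
  have hsin2 := (hasDerivAt_sin_const_mul (φ := φ) (n-1)).fun_pow 2
  refine (((hasDerivAt_const φ k1).div hsin2 hs2).add
    (((hasDerivAt_cos_const_mul (n-1)).const_mul k2).div hsin2 hs2)).congr_deriv ?_
  rw [cscCotPotential]
  norm_num
  field_simp
  linear_combination (-(n-1) * k2) * sin_sq_add_cos_sq ((n-1)*φ)

theorem hasDerivAt_cscCotPotential (hs : sin ((n-1)*φ) ≠ 0) :
    HasDerivAt (cscCotPotential n k1 k2)
      (-2 * (n-1) * (sin ((n-1)*φ) * angularPotential n k1 k2 φ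
        + cos ((n-1)*φ) * cscCotPotential n k1 k2 φ / sin ((n-1)*φ))) φ := by
  have hcsc : HasDerivAt (fun x => 1 / sin ((n-1)*x)) _ φ :=
    (hasDerivAt_const φ 1).div (hasDerivAt_sin_const_mul (n-1)) hs
  have hcot : HasDerivAt (fun x => cos ((n-1)*x) / sin ((n-1)*x)) _ φ :=
    (hasDerivAt_cos_const_mul (n-1)).div (hasDerivAt_sin_const_mul (n-1)) hs
  refine (((hcsc.mul hcot).const_mul (2 * k1)).add
    (((hcsc.fun_pow 2).add (hcot.fun_pow 2)).const_mul k2)).congr_deriv ?_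
  rw [cscCotPotential, angularPotential]
  norm_num
  field_simp
  ring

end Angular

theorem hasDerivAt_rpow_const_div_self {r : ℝ} (hr : r ≠ 0) (a : ℝ) :
    HasDerivAt (fun x => x ^ a) (a * r ^ a / r) r := by
  simpa [rpow_sub_one hr, mul_div_assoc] using hasDerivAt_rpow_const (p := a) (Or.inl hr)

section PhaseSpace

variable {n k0 k1 k2 r φ pr pφ : ℝ}

theorem Hnc1_eq (hr : 0 < r) :
    Hnc1 n k0 k1 k2 r φ pr pφ
      = (r ^ (n-1)) ^ 2 * ((r^2 * pr^2 + pφ^2) / 2 + angularPotential n k1 k2 φ)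
        + k0 * r ^ (n-1) := by
  have h2n : r ^ (2*n) = (r ^ (n-1)) ^ 2 * r ^ 2 := by
    rw [show 2*n = (n-1) * (2:ℕ) + (2:ℕ) by push_cast; ring, rpow_add_natCast hr.ne',
      rpow_mul_natCast hr.le]
  have h2k : r ^ (2*(n-1)) = (r ^ (n-1)) ^ 2 := by
    rw [mul_comm, ← rpow_mul_natCast hr.le]; norm_num
  rw [Hnc1, Tkin, h2n, h2k, angularPotential]
  field_simp
  ring

theorem hasDerivAt_Hnc1_r (hr : 0 < r) :
    HasDerivAt (fun x => Hnc1 n k0 k1 k2 x φ pr pφ)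
      ((n-1) * r ^ (n-1) / r * (2 * r ^ (n-1)
          * ((r^2 * pr^2 + pφ^2) / 2 + angularPotential n k1 k2 φ) + k0)
        + (r ^ (n-1)) ^ 2 * (r * pr^2)) r := by
  have hA := hasDerivAt_rpow_const_div_self hr.ne' (n-1)
  have h := ((hA.fun_pow 2).fun_mul ((((hasDerivAt_pow 2 r).mul_const (pr^2)).div_const
    2).add_const (pφ^2 / 2 + angularPotential n k1 k2 φ))).fun_add (hA.const_mul k0)
  refine (h.congr_deriv ?_).congr_of_eventuallyEq ?_
  · norm_num; ring
  · filter_upwards [Ioi_mem_nhds hr] with x hx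
    rw [Hnc1_eq hx]; ring

theorem hasDerivAt_Hnc1_φ (hr : 0 < r) (hs : sin ((n-1)*φ) ≠ 0) :
    HasDerivAt (fun x => Hnc1 n k0 k1 k2 r x pr pφ)
      ((r ^ (n-1)) ^ 2 * (-(n-1) * cscCotPotential n k1 k2 φ / sin ((n-1)*φ))) φ := by
  simp only [Hnc1_eq hr]
  exact ((hasDerivAt_angularPotential k1 k2 hs).const_add _).const_mul _ |>.add_const _

theorem hasDerivAt_Hnc1_pr (hr : 0 < r) :
    HasDerivAt (fun x => Hnc1 n k0 k1 k2 r φ x pφ) ((r ^ (n-1)) ^ 2 * r^2 * pr) pr := by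
  simp only [Hnc1_eq hr]
  refine (((((hasDerivAt_pow 2 pr).const_mul (r^2)).add_const (pφ^2)).div_const 2).add_const
    _).const_mul _ |>.add_const _ |>.congr_deriv ?_
  norm_num; ring

theorem hasDerivAt_Hnc1_pφ (hr : 0 < r) :
    HasDerivAt (fun x => Hnc1 n k0 k1 k2 r φ pr x) ((r ^ (n-1)) ^ 2 * pφ) pφ := by
  simp only [Hnc1_eq hr]
  refine ((((hasDerivAt_pow 2 pφ).const_add (r^2 * pr^2)).div_const 2).add_const
    _).const_mul _ |>.add_const _ |>.congr_deriv ?_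
  norm_num

noncomputable def Jc2 (n k1 k2 : ℝ) (_r φ _pr pφ : ℝ) : ℝ :=
  pφ^2 + 2 * angularPotential n k1 k2 φ

noncomputable def Jc3 (n k0 k1 k2 : ℝ) (r φ pr pφ : ℝ) : ℝ :=
  P2 n r φ pr pφ * pφ - k0 * cos ((n-1)*φ)
    - 2 * k1 * r ^ (n-1) * ((1 / sin ((n-1)*φ)) * (cos ((n-1)*φ) / sin ((n-1)*φ)))
    - k2 * r ^ (n-1) * ((1 / sin ((n-1)*φ))^2 + (cos ((n-1)*φ) / sin ((n-1)*φ))^2)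

theorem Jc3_eq (hr : 0 < r) :
    Jc3 n k0 k1 k2 r φ pr pφ
      = r ^ (n-1) * ((r * pr * sin ((n-1)*φ) - pφ * cos ((n-1)*φ)) * pφ
          - cscCotPotential n k1 k2 φ) - k0 * cos ((n-1)*φ) := by
  rw [Jc3, P2, cscCotPotential, rpow_sub_one hr.ne']
  field_simp
  ring

theorem hasDerivAt_Jc3_r (hr : 0 < r) :
    HasDerivAt (fun x => Jc3 n k0 k1 k2 x φ pr pφ)
      ((n-1) * r ^ (n-1) / r * ((r * pr * sin ((n-1)*φ) - pφ * cos ((n-1)*φ)) * pφ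
          - cscCotPotential n k1 k2 φ) + r ^ (n-1) * (pr * sin ((n-1)*φ) * pφ)) r := by
  have h := (hasDerivAt_rpow_const_div_self hr.ne' (n-1)).fun_mul
    (((((hasDerivAt_id' r).mul_const pr).mul_const (sin ((n-1)*φ))).sub_const
      (pφ * cos ((n-1)*φ))).mul_const pφ |>.sub_const (cscCotPotential n k1 k2 φ))
  refine ((h.sub_const (k0 * cos ((n-1)*φ))).congr_deriv ?_).congr_of_eventuallyEq ?_
  · ring
  · filter_upwards [Ioi_mem_nhds hr] with x hx
    rw [Jc3_eq hx]

theorem hasDerivAt_Jc3_φ (hr : 0 < r) (hs : sin ((n-1)*φ) ≠ 0) :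
    HasDerivAt (fun x => Jc3 n k0 k1 k2 r x pr pφ)
      (r ^ (n-1) * ((r * pr * (cos ((n-1)*φ) * (n-1)) + pφ * (sin ((n-1)*φ) * (n-1))) * pφ
          + 2 * (n-1) * (sin ((n-1)*φ) * angularPotential n k1 k2 φ
            + cos ((n-1)*φ) * cscCotPotential n k1 k2 φ / sin ((n-1)*φ)))
        + k0 * (sin ((n-1)*φ) * (n-1))) φ := by
  simp only [Jc3_eq hr]
  have hsin := hasDerivAt_sin_const_mul (φ := φ) (n-1)
  have hcos := hasDerivAt_cos_const_mul (φ := φ) (n-1)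
  refine (((((hsin.const_mul (r * pr)).sub (hcos.const_mul pφ)).mul_const pφ).sub
    (hasDerivAt_cscCotPotential k1 k2 hs)).const_mul _ |>.sub (hcos.const_mul k0)).congr_deriv ?_
  ring

theorem hasDerivAt_Jc3_pr (hr : 0 < r) :
    HasDerivAt (fun x => Jc3 n k0 k1 k2 r φ x pφ)
      (r ^ (n-1) * (r * sin ((n-1)*φ) * pφ)) pr := by
  simp only [Jc3_eq hr]
  refine ((((((hasDerivAt_id' pr).const_mul r).mul_const (sin ((n-1)*φ))).sub_const _).mul_const
    pφ).sub_const _).const_mul _ |>.sub_const _ |>.congr_deriv ?_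
  ring

theorem hasDerivAt_Jc3_pφ (hr : 0 < r) :
    HasDerivAt (fun x => Jc3 n k0 k1 k2 r φ pr x)
      (r ^ (n-1) * (r * pr * sin ((n-1)*φ) - 2 * pφ * cos ((n-1)*φ))) pφ := by
  simp only [Jc3_eq hr]
  refine (((((hasDerivAt_id' pφ).mul_const (cos ((n-1)*φ))).const_sub _).fun_mul
    (hasDerivAt_id' pφ)).sub_const _).const_mul _ |>.sub_const _ |>.congr_deriv ?_
  ring

theorem pb_Jc2_Hnc1 (hr : 0 < r) (hs : sin ((n-1)*φ) ≠ 0) :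
    pb (Jc2 n k1 k2) (Hnc1 n k0 k1 k2) r φ pr pφ = 0 := by
  rw [pb_eq_of_hasDerivAt (hasDerivAt_const r _)
    (((hasDerivAt_angularPotential k1 k2 hs).const_mul 2).const_add (pφ^2))
    (hasDerivAt_const pr _) ((hasDerivAt_pow 2 pφ).add_const _)
    (hasDerivAt_Hnc1_r hr) (hasDerivAt_Hnc1_φ hr hs) (hasDerivAt_Hnc1_pr hr)
    (hasDerivAt_Hnc1_pφ hr)]
  ring

theorem pb_Jc3_Hnc1 (hr : 0 < r) (hs : sin ((n-1)*φ) ≠ 0) :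
    pb (Jc3 n k0 k1 k2) (Hnc1 n k0 k1 k2) r φ pr pφ = 0 := by
  rw [pb_eq_of_hasDerivAt (hasDerivAt_Jc3_r hr) (hasDerivAt_Jc3_φ hr hs) (hasDerivAt_Jc3_pr hr)
    (hasDerivAt_Jc3_pφ hr)
    (hasDerivAt_Hnc1_r hr) (hasDerivAt_Hnc1_φ hr hs) (hasDerivAt_Hnc1_pr hr)
    (hasDerivAt_Hnc1_pφ hr)]
  field_simp
  ring

end PhaseSpace

/-- J_c2 and J_c3 are constants of motion of H_nc1 on the open subset of
Ω = {r > 0} where sin(k_n φ) ≠ 0. -/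
theorem Hnc1_superintegrable (n k0 k1 k2 : ℝ) :
    ∀ r φ pr pφ : ℝ, 0 < r → sin ((n-1)*φ) ≠ 0 →
      pb (fun _ φ _ pφ => pφ^2
            + 2 * (k1 / (sin ((n-1)*φ))^2 + k2 * cos ((n-1)*φ) / (sin ((n-1)*φ))^2))
         (Hnc1 n k0 k1 k2) r φ pr pφ = 0 ∧
      pb (fun r φ pr pφ => P2 n r φ pr pφ * pφ - k0 * cos ((n-1)*φ)
            - 2 * k1 * r ^ (n-1) * ((1 / sin ((n-1)*φ)) * (cos ((n-1)*φ) / sin ((n-1)*φ)))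
            - k2 * r ^ (n-1) * ((1 / sin ((n-1)*φ))^2 + (cos ((n-1)*φ) / sin ((n-1)*φ))^2))
         (Hnc1 n k0 k1 k2) r φ pr pφ = 0 :=
  fun _ _ _ _ hr hs => ⟨pb_Jc2_Hnc1 hr hs, pb_Jc3_Hnc1 hr hs⟩
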